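/- arXiv:2507.16603 — 2 statements merged into one kernel-verified Lean document; each statement's English description precedes it below -/
import Mathlib

section
/- Let Y¹, Yᵃ, Yᵇ be mutually independent random variables, each exponentially distributed with rate 1. Let τ¹ be the honest random time on [s,t] associated with the intensity λ1 and driven by Y¹, and let τ⁰ₐ and τ⁰ᵦ be the honest random times on [s,t] associated with the intensity λ0 and driven by Yᵃ and Yᵇ respectively. Then the second moment of the estimator satisfies E[exp(-∫_{τ¹}^t λ0(u) du)²] = P(max(τ⁰ₐ, τ⁰ᵦ) ≤ τ¹). -/
open MeasureTheory ProbabilityTheory Real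

/-- The honest random time on `[s,t]` associated with the intensity `lam`,
driven by the value `y`: `max (s, inf {r ∈ [s,t] : ∫_r^t lam ≤ y})`. -/
noncomputable def honestTime (s t : ℝ) (lam : ℝ → ℝ) (y : ℝ) : ℝ :=
  max s (sInf {r | r ∈ Set.Icc s t ∧ ∫ u in r..t, lam u ≤ y})


section aux
variable {s t : ℝ} {lam : ℝ → ℝ}

lemma myF_cont (hc : Continuous lam) : Continuous fun r => ∫ u in r..t, lam u := by
  have h := (intervalIntegral.continuous_primitive (μ := volume)
    (fun a b => (hc.intervalIntegrable a b)) t).neg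
  convert h using 1
  ext r
  simp [intervalIntegral.integral_symm t r]

lemma myF_nonneg (hnn : ∀ u ∈ Set.Icc s t, 0 ≤ lam u) {r : ℝ} (hr : r ∈ Set.Icc s t) :
    0 ≤ ∫ u in r..t, lam u := by
  apply intervalIntegral.integral_nonneg hr.2
  intro u hu
  exact hnn u ⟨le_trans hr.1 hu.1, hu.2⟩

lemma myF_antitone (hc : Continuous lam) {r₁ r₂ : ℝ} (h1 : r₁ ∈ Set.Icc s t)
    (h2 : r₂ ∈ Set.Icc s t) (h12 : r₁ ≤ r₂) (hnn : ∀ u ∈ Set.Icc s t, 0 ≤ lam u) :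
    (∫ u in r₂..t, lam u) ≤ ∫ u in r₁..t, lam u := by
  have : (∫ u in r₁..r₂, lam u) + ∫ u in r₂..t, lam u = ∫ u in r₁..t, lam u :=
    intervalIntegral.integral_add_adjacent_intervals (hc.intervalIntegrable _ _)
      (hc.intervalIntegrable _ _)
  rw [← this]
  have : 0 ≤ ∫ u in r₁..r₂, lam u := by
    apply intervalIntegral.integral_nonneg h12
    intro u hu
    exact hnn u ⟨le_trans h1.1 hu.1, le_trans hu.2 h2.2⟩
  linarith

lemma honestTime_mem_Icc (hs : 0 ≤ s) (hst : s ≤ t) (y : ℝ) :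
    honestTime s t lam y ∈ Set.Icc s t := by
  refine ⟨le_max_left _ _, ?_⟩
  rw [honestTime, max_le_iff]
  refine ⟨hst, ?_⟩
  by_cases hne : {r | r ∈ Set.Icc s t ∧ ∫ u in r..t, lam u ≤ y}.Nonempty
  · obtain ⟨r, hr⟩ := hne
    exact le_trans (csInf_le ⟨s, fun x hx => hx.1.1⟩ hr) hr.1.2
  · rw [Set.not_nonempty_iff_eq_empty] at hne
    rw [hne, Real.sInf_empty]
    linarith

lemma honestTime_le_iff (hst : s ≤ t) (hc : Continuous lam)
    (hnn : ∀ u ∈ Set.Icc s t, 0 ≤ lam u) {y r : ℝ} (hy : 0 ≤ y) (hr : r ∈ Set.Icc s t) :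
    honestTime s t lam y ≤ r ↔ (∫ u in r..t, lam u) ≤ y := by
  set S := {r | r ∈ Set.Icc s t ∧ ∫ u in r..t, lam u ≤ y} with hS
  have hSne : S.Nonempty := ⟨t, ⟨hst, le_refl t⟩, by simp [hy]⟩
  have hSbdd : BddBelow S := ⟨s, fun x hx => hx.1.1⟩
  have hSclosed : IsClosed S := by
    have : S = Set.Icc s t ∩ (fun r => ∫ u in r..t, lam u) ⁻¹' Set.Iic y := by
      ext x; simp [hS, Set.mem_Icc, and_comm]
    rw [this]
    exact isClosed_Icc.inter (IsClosed.preimage (myF_cont hc) isClosed_Iic)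
  have hmem : sInf S ∈ S := hSclosed.csInf_mem hSne hSbdd
  constructor
  · intro h
    have h1 : max s (sInf S) ≤ r := h
    have h2 : sInf S ≤ r := le_trans (le_max_right _ _) h1
    exact le_trans (myF_antitone hc hmem.1 hr h2 hnn) hmem.2
  · intro h
    have hrS : r ∈ S := ⟨hr, h⟩
    exact max_le hr.1 (csInf_le hSbdd hrS)

lemma honestTime_antitone (hst : s ≤ t) :
    Antitone fun y => honestTime s t lam (max y 0) := by
  intro y₁ y₂ h12
  have hm : max y₁ 0 ≤ max y₂ 0 := max_le_max h12 le_rfl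
  apply max_le_max le_rfl
  have hne : {r | r ∈ Set.Icc s t ∧ ∫ u in r..t, lam u ≤ max y₁ 0}.Nonempty :=
    ⟨t, ⟨hst, le_rfl⟩, by simp⟩
  apply csInf_le_csInf ⟨s, fun x hx => hx.1.1⟩ hne
  intro x hx
  exact ⟨hx.1, le_trans hx.2 hm⟩

end aux

lemma expMeasure_Iio_zero : expMeasure 1 (Set.Iio 0) = 0 := by
  rw [expMeasure, gammaMeasure, withDensity_apply _ measurableSet_Iio]
  rw [setLIntegral_congr_fun measurableSet_Iio
    (fun x (hx : x < 0) => gammaPDF_of_neg hx)]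
  simp

lemma expMeasure_singleton (a : ℝ) : expMeasure 1 {a} = 0 := by
  rw [expMeasure, gammaMeasure, withDensity_apply _ (measurableSet_singleton a)]
  rw [(by simp : (volume.restrict {a}) = 0)]
  simp

lemma expMeasure_Ici {a : ℝ} (ha : 0 ≤ a) :
    expMeasure 1 (Set.Ici a) = ENNReal.ofReal (Real.exp (-a)) := by
  have hP : IsProbabilityMeasure (expMeasure 1) := isProbabilityMeasure_expMeasure one_pos
  have hIic : expMeasure 1 (Set.Iic a) = ENNReal.ofReal (1 - Real.exp (-a)) := by
    have h := cdf_eq_real (μ := expMeasure 1) a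
    have h2 : cdf (expMeasure 1) a = 1 - Real.exp (-a) := by
      have := cdf_expMeasure_eq one_pos a
      rw [this, if_pos ha]
      norm_num
    rw [h2, measureReal_def] at h
    rw [← ENNReal.ofReal_toReal (measure_ne_top _ _), ← h]
  have hIoi : expMeasure 1 (Set.Ioi a) = 1 - ENNReal.ofReal (1 - Real.exp (-a)) := by
    rw [← Set.compl_Iic, prob_compl_eq_one_sub measurableSet_Iic, hIic]
  have hIci : expMeasure 1 (Set.Ici a) = expMeasure 1 (Set.Ioi a) := by
    rw [← Set.Ioi_union_left,
      measure_union (by simp [Set.disjoint_singleton_right]) (measurableSet_singleton a),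
      expMeasure_singleton, add_zero]
  rw [hIci, hIoi]
  have he1 : Real.exp (-a) ≤ 1 := Real.exp_le_one_iff.mpr (by linarith)
  have : ENNReal.ofReal (Real.exp (-a)) + ENNReal.ofReal (1 - Real.exp (-a)) = 1 := by
    rw [← ENNReal.ofReal_add (le_of_lt (Real.exp_pos _)) (by linarith)]
    norm_num
  rw [← this]
  rw [ENNReal.add_sub_cancel_right ENNReal.ofReal_ne_top]

/-- Second moment of the estimator: with `τ¹` the honest time on `[s,t]` associated with
`λ₁` driven by `Y¹`, and `τ⁰ₐ`, `τ⁰ᵦ` honest times associated with `λ₀` driven by `Yᵃ`, `Yᵇ`,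
where `Y¹, Yᵃ, Yᵇ` are mutually independent `Exp(1)` random variables,
`E[exp (-∫_{τ¹}^t λ₀(u) du)²] = P(max (τ⁰ₐ, τ⁰ᵦ) ≤ τ¹)`. -/
theorem second_moment_eq_prob
    {Ω : Type*} [MeasurableSpace Ω] (P : Measure Ω) [IsProbabilityMeasure P]
    (s t : ℝ) (hs : 0 ≤ s) (hst : s < t)
    (lam0 lam1 : ℝ → ℝ) (hlam0 : Continuous lam0) (hlam1 : Continuous lam1)
    (hlam0_nonneg : ∀ u ∈ Set.Icc s t, 0 ≤ lam0 u)
    (hlam1_nonneg : ∀ u ∈ Set.Icc s t, 0 ≤ lam1 u)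
    (Y1 Ya Yb : Ω → ℝ) (hY1 : Measurable Y1) (hYa : Measurable Ya) (hYb : Measurable Yb)
    (hY1law : P.map Y1 = expMeasure 1) (hYalaw : P.map Ya = expMeasure 1)
    (hYblaw : P.map Yb = expMeasure 1)
    (hindep : iIndepFun ![Y1, Ya, Yb] P) :
    (∫ ω, (Real.exp (-(∫ u in (honestTime s t lam1 (Y1 ω))..t, lam0 u))) ^ 2 ∂P)
      = (P {ω | max (honestTime s t lam0 (Ya ω)) (honestTime s t lam0 (Yb ω))
            ≤ honestTime s t lam1 (Y1 ω)}).toReal := by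
  have hμP : IsProbabilityMeasure (expMeasure 1) := isProbabilityMeasure_expMeasure one_pos
  set μ := expMeasure 1 with hμ
  -- the functions
  set c : ℝ → ℝ := fun y => ∫ u in (honestTime s t lam1 y)..t, lam0 u with hc
  set c' : ℝ → ℝ := fun y => c (max y 0) with hc'
  have hT_mem : ∀ y : ℝ, honestTime s t lam1 y ∈ Set.Icc s t :=
    fun y => honestTime_mem_Icc hs hst.le y
  have hc'_meas : Measurable c' := by
    have hT' : Antitone fun y => honestTime s t lam1 (max y 0) :=
      honestTime_antitone hst.le
    exact (myF_cont hlam0).measurable.comp hT'.measurable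
  have hc_nonneg : ∀ y, 0 ≤ c y := fun y => myF_nonneg hlam0_nonneg (hT_mem _)
  have hc'_nonneg : ∀ y, 0 ≤ c' y := fun y => hc_nonneg _
  -- a.e. nonnegativity
  have hae : ∀ (Y : Ω → ℝ), Measurable Y → P.map Y = μ → ∀ᵐ ω ∂P, 0 ≤ Y ω := by
    intro Y hm hlaw
    have : P {ω | Y ω < 0} = 0 := by
      have : {ω | Y ω < 0} = Y ⁻¹' (Set.Iio 0) := rfl
      rw [this, ← Measure.map_apply hm measurableSet_Iio, hlaw]
      exact expMeasure_Iio_zero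
    filter_upwards [measure_eq_zero_iff_ae_notMem.mp this] with ω hω
    simpa [not_lt] using hω
  -- the target sets
  set S : Set (ℝ × ℝ × ℝ) := {p | c' p.1 ≤ p.2.1 ∧ c' p.1 ≤ p.2.2} with hSdef
  have hSmeas : MeasurableSet S := by
    apply MeasurableSet.inter
    · exact measurableSet_le (hc'_meas.comp measurable_fst) (measurable_fst.comp measurable_snd)
    · exact measurableSet_le (hc'_meas.comp measurable_fst) (measurable_snd.comp measurable_snd)
  set Z : Ω → ℝ × ℝ × ℝ := fun ω => (Y1 ω, (Ya ω, Yb ω)) with hZ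
  have hZmeas : Measurable Z := hY1.prodMk (hYa.prodMk hYb)
  -- event identification
  have hA_eq : P {ω | max (honestTime s t lam0 (Ya ω)) (honestTime s t lam0 (Yb ω))
      ≤ honestTime s t lam1 (Y1 ω)} = P (Z ⁻¹' S) := by
    apply measure_congr
    rw [Filter.eventuallyEq_set]
    filter_upwards [hae Y1 hY1 hY1law, hae Ya hYa hYalaw, hae Yb hYb hYblaw] with ω h1 ha hb
    have hmax : max (Y1 ω) 0 = Y1 ω := max_eq_left h1
    simp only [Set.mem_setOf_eq, Set.mem_preimage, hZ, hSdef, max_le_iff]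
    rw [honestTime_le_iff hst.le hlam0 hlam0_nonneg ha (hT_mem (Y1 ω)),
      honestTime_le_iff hst.le hlam0 hlam0_nonneg hb (hT_mem (Y1 ω))]
    simp only [hc', hc, hmax]
  -- joint law
  have hmeasi : ∀ i, Measurable (![Y1, Ya, Yb] i) := by
    intro i
    fin_cases i <;> assumption
  have hab : IndepFun Ya Yb P := by
    have := hindep.indepFun (show (1 : Fin 3) ≠ 2 by decide)
    exact this
  have h1ab : IndepFun Y1 (fun ω => (Ya ω, Yb ω)) P := by
    have := (hindep.indepFun_prodMk hmeasi 1 2 0 (by decide) (by decide)).symm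
    exact this
  have hmap_ab : P.map (fun ω => (Ya ω, Yb ω)) = μ.prod μ := by
    rw [(indepFun_iff_map_prod_eq_prod_map_map hYa.aemeasurable hYb.aemeasurable).mp hab,
      hYalaw, hYblaw]
  have hmap : P.map Z = μ.prod (μ.prod μ) := by
    rw [hZ, (indepFun_iff_map_prod_eq_prod_map_map hY1.aemeasurable
      (hYa.prodMk hYb).aemeasurable).mp h1ab, hY1law, hmap_ab]
  have hPB : P (Z ⁻¹' S) = (μ.prod (μ.prod μ)) S := by
    rw [← hmap, Measure.map_apply hZmeas hSmeas]
  -- Fubini computation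
  have hslice : ∀ y : ℝ, (Prod.mk y ⁻¹' S) = Set.Ici (c' y) ×ˢ Set.Ici (c' y) := by
    intro y
    ext ⟨q1, q2⟩
    simp only [hSdef, Set.mem_preimage, Set.mem_setOf_eq, Set.mem_prod, Set.mem_Ici]
  have hFub : (μ.prod (μ.prod μ)) S
      = ∫⁻ y, ENNReal.ofReal (Real.exp (-(c' y)) ^ 2) ∂μ := by
    rw [Measure.prod_apply hSmeas]
    apply lintegral_congr
    intro y
    rw [hslice y, Measure.prod_prod, expMeasure_Ici (hc'_nonneg y)]
    rw [sq, ENNReal.ofReal_mul (le_of_lt (Real.exp_pos _))]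
  -- LHS computation
  have hgg' : (fun y => Real.exp (-(c y)) ^ 2) =ᵐ[μ] fun y => Real.exp (-(c' y)) ^ 2 := by
    have hneg : μ (Set.Iio 0) = 0 := expMeasure_Iio_zero
    filter_upwards [measure_eq_zero_iff_ae_notMem.mp hneg] with y hy
    have : 0 ≤ y := by simpa [not_lt] using hy
    simp [hc', max_eq_left this]
  have hg'_meas : Measurable fun y => Real.exp (-(c' y)) ^ 2 :=
    ((hc'_meas.neg.exp).pow_const 2)
  have hLHS : (∫ ω, (Real.exp (-(∫ u in (honestTime s t lam1 (Y1 ω))..t, lam0 u))) ^ 2 ∂P)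
      = ∫ y, Real.exp (-(c y)) ^ 2 ∂μ := by
    rw [← hY1law]
    exact (integral_map (f := fun y => Real.exp (-(c y)) ^ 2) hY1.aemeasurable
      (hg'_meas.aestronglyMeasurable.congr (by rw [hY1law]; exact hgg'.symm))).symm
  have hint2 : (∫ y, Real.exp (-(c y)) ^ 2 ∂μ)
      = (∫⁻ y, ENNReal.ofReal (Real.exp (-(c' y)) ^ 2) ∂μ).toReal := by
    rw [integral_congr_ae hgg']
    rw [integral_eq_lintegral_of_nonneg_ae (ae_of_all _ fun y => sq_nonneg _)
      hg'_meas.aestronglyMeasurable]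
  rw [hLHS, hint2, hA_eq, hPB, hFub]
end

section
/- (Pair representation of P01.) Let Y¹ and Y⁰ be independent random variables, each exponentially distributed with rate 1, let τ¹ be the honest random time on [s,t] associated with the intensity λ1 and driven by Y¹, and let τ⁰ be the honest random time on [s,t] associated with the intensity λ0 and driven by Y⁰. Then P(τ⁰ > τ¹) = P01(s,t); in particular the indicator 1(τ⁰ > τ¹) is an unbiased estimator of P01(s,t). -/
/-!
Write `Λ(v) = ∫_v^t λ`. For `y ≥ 0` and `w ∈ [s,t]` the honest time satisfies
`w < τ(y) ↔ y < Λ(w)`, so when `Y ~ Exp(1)` the law of `τ` is an atom at `s` plus the density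
`λ(v) e^{-Λ(v)}` on `(s,t]`, and `P(τ < v) = e^{-Λ(v)}` for `v ∈ (s,t]`. Conditioning on `τ¹` and
using Tonelli,
`P(τ¹ < τ⁰) = ∫_s^t λ₀(v) e^{-Λ₀(v)} P(τ¹ < v) dv = ∫_s^t λ₀(v) e^{-Λ₀(v) - Λ₁(v)} dv`.
-/

open MeasureTheory ProbabilityTheory Real

open Set

section CumulativeIntensity

variable {lam : ℝ → ℝ}

lemma hasDerivAt_integral_left (hlam : Continuous lam) (r t : ℝ) :
    HasDerivAt (fun r => ∫ u in r..t, lam u) (-lam r) r :=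
  intervalIntegral.integral_hasDerivAt_left (hlam.intervalIntegrable r t)
    (hlam.stronglyMeasurableAtFilter _ _) hlam.continuousAt

lemma continuous_integral_left (hlam : Continuous lam) (t : ℝ) :
    Continuous fun r => ∫ u in r..t, lam u :=
  continuous_iff_continuousAt.2 fun r => (hasDerivAt_integral_left hlam r t).continuousAt

lemma antitoneOn_integral_left {s t : ℝ} (hlam : Continuous lam)
    (hnn : ∀ u ∈ Icc s t, 0 ≤ lam u) : AntitoneOn (fun r => ∫ u in r..t, lam u) (Icc s t) :=
  fun a ha _ hb hab => intervalIntegral.integral_mono_interval hab hb.2 le_rfl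
    ((ae_restrict_iff' measurableSet_Ioc).2
      (ae_of_all _ fun u hu => hnn u ⟨ha.1.trans hu.1.le, hu.2⟩))
    (hlam.intervalIntegrable a t)

lemma integral_nonneg_left {s t w : ℝ} (hnn : ∀ u ∈ Icc s t, 0 ≤ lam u) (hw : w ∈ Icc s t) :
    0 ≤ ∫ u in w..t, lam u :=
  intervalIntegral.integral_nonneg hw.2 fun u hu => hnn u ⟨hw.1.trans hu.1, hu.2⟩

/-- On `(s,t]`, the law of the honest time has this density (and an atom at `s`). -/
noncomputable def honestDensity (t : ℝ) (lam : ℝ → ℝ) (v : ℝ) : ℝ :=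
  lam v * exp (-∫ u in v..t, lam u)

lemma continuous_honestDensity (hlam : Continuous lam) (t : ℝ) :
    Continuous (honestDensity t lam) :=
  hlam.mul (continuous_integral_left hlam t).neg.rexp

lemma integral_honestDensity (hlam : Continuous lam) (w t : ℝ) :
    ∫ v in w..t, honestDensity t lam v = 1 - exp (-∫ u in w..t, lam u) := by
  have hderiv : ∀ v, HasDerivAt (fun r => exp (-∫ u in r..t, lam u)) (honestDensity t lam v) v :=
    fun v => by simpa [honestDensity, mul_comm] using (hasDerivAt_integral_left hlam v t).neg.exp
  rw [intervalIntegral.integral_eq_sub_of_hasDerivAt (fun v _ => hderiv v)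
    ((continuous_honestDensity hlam t).intervalIntegrable w t)]
  simp

lemma honestDensity_nonneg {s t v : ℝ} (hnn : ∀ u ∈ Icc s t, 0 ≤ lam u) (hv : v ∈ Icc s t) :
    0 ≤ honestDensity t lam v :=
  mul_nonneg (hnn v hv) (exp_nonneg _)

lemma honestDensity_mul_exp_neg_integral {lam' : ℝ → ℝ} (hlam : Continuous lam)
    (hlam' : Continuous lam') (t v : ℝ) :
    honestDensity t lam v * exp (-∫ u in v..t, lam' u)
      = exp (-∫ u in v..t, (lam u + lam' u)) * lam v := by
  rw [honestDensity, intervalIntegral.integral_add (hlam.intervalIntegrable v t)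
    (hlam'.intervalIntegrable v t), neg_add, exp_add]
  ring

end CumulativeIntensity

lemma ofReal_intervalIntegral_eq_setLIntegral {f : ℝ → ℝ} {a b : ℝ} (hab : a ≤ b)
    (hf : IntervalIntegrable f volume a b) (hnn : ∀ v ∈ Ioc a b, 0 ≤ f v) :
    ENNReal.ofReal (∫ v in a..b, f v) = ∫⁻ v in Ioc a b, ENNReal.ofReal (f v) := by
  rw [intervalIntegral.integral_of_le hab, ofReal_integral_eq_lintegral_ofReal
    ((intervalIntegrable_iff_integrableOn_Ioc_of_le hab).1 hf)]
  exact (ae_restrict_iff' measurableSet_Ioc).2 (ae_of_all _ hnn)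

lemma ProbabilityTheory.IndepFun.map_prod_comp_eq {Ω α β γ δ : Type*} [MeasurableSpace Ω]
    [MeasurableSpace α] [MeasurableSpace β] [MeasurableSpace γ] [MeasurableSpace δ]
    {P : Measure Ω} [IsFiniteMeasure P] {X : Ω → α} {Y : Ω → β} (hXY : IndepFun X Y P)
    (hX : Measurable X) (hY : Measurable Y) {f : α → γ} {g : β → δ}
    (hf : Measurable f) (hg : Measurable g) :
    P.map (fun ω => (f (X ω), g (Y ω))) = ((P.map X).map f).prod ((P.map Y).map g) := by
  rw [Measure.map_map hf hX, Measure.map_map hg hY]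
  exact (hXY.comp hf hg).map_prod_eq_prod_map_map (hf.comp hX).aemeasurable
    (hg.comp hY).aemeasurable

section ExpMeasure

variable {r c : ℝ}

instance : SFinite (expMeasure r) := by
  unfold expMeasure gammaMeasure; infer_instance

instance : NullSingletonClass (expMeasure r) := by
  unfold expMeasure gammaMeasure; infer_instance

lemma expMeasure_Iic (hr : 0 < r) (hc : 0 ≤ c) :
    expMeasure r (Iic c) = ENNReal.ofReal (1 - exp (-(r * c))) := by
  have := isProbabilityMeasure_expMeasure hr
  rw [← ofReal_cdf, cdf_expMeasure_eq hr, if_pos hc]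

lemma expMeasure_Ioi (hr : 0 < r) (hc : 0 ≤ c) :
    expMeasure r (Ioi c) = ENNReal.ofReal (exp (-(r * c))) := by
  have := isProbabilityMeasure_expMeasure hr
  rw [← compl_Iic, prob_compl_eq_one_sub measurableSet_Iic, expMeasure_Iic hr hc,
    ← ENNReal.ofReal_one, ← ENNReal.ofReal_sub _ (by simpa using mul_nonneg hr.le hc),
    sub_sub_cancel]

lemma ae_nonneg_expMeasure (hr : 0 < r) : ∀ᵐ y ∂expMeasure r, 0 ≤ y := by
  refine measure_mono_null (t := Iic 0) (fun y (hy : ¬ 0 ≤ y) => (not_le.1 hy).le) ?_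
  simp [expMeasure_Iic hr le_rfl]

end ExpMeasure

lemma lintegral_setLIntegral_Ioc {μ ν : Measure ℝ} [SFinite μ] [SFinite ν] {a b : ℝ}
    (hμ : ∀ᵐ x ∂μ, a ≤ x) {g : ℝ → ENNReal} (hg : Measurable g) :
    ∫⁻ x, ∫⁻ v in Ioc x b, g v ∂ν ∂μ = ∫⁻ v in Ioc a b, g v * μ (Iio v) ∂ν := by
  have hrestrict : ∀ᵐ x ∂μ, ∫⁻ v in Ioc x b, g v ∂ν = ∫⁻ v in Ioc a b, (Ioi x).indicator g v ∂ν :=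
    hμ.mono fun x hx => by
      rw [lintegral_indicator measurableSet_Ioi, Measure.restrict_restrict measurableSet_Ioi,
        inter_comm, Ioc_inter_Ioi, max_eq_right hx]
  have hmeas : Measurable (Function.uncurry fun x v => (Ioi x).indicator g v) := by
    have : (Function.uncurry fun x v => (Ioi x).indicator g v)
        = {p : ℝ × ℝ | p.1 < p.2}.indicator (g ∘ Prod.snd) := by
      ext ⟨x, v⟩; simp [indicator_apply]
    rw [this]
    exact (hg.comp measurable_snd).indicator (measurableSet_lt measurable_fst measurable_snd)
  rw [lintegral_congr_ae hrestrict, lintegral_lintegral_swap hmeas.aemeasurable]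
  refine lintegral_congr fun v => ?_
  have : (fun x => (Ioi x).indicator g v) = (Iio v).indicator fun _ => g v := by
    ext x; simp [indicator_apply]
  rw [this, lintegral_indicator_const measurableSet_Iio]

section HonestTime

variable {s t w y : ℝ} {lam : ℝ → ℝ}

lemma honestTime_le (hw : w ∈ Icc s t) (h : ∫ u in w..t, lam u ≤ y) :
    honestTime s t lam y ≤ w :=
  max_le hw.1 (csInf_le ⟨s, fun _ hr => hr.1.1⟩ ⟨hw, h⟩)

lemma honestTime_mem (hst : s ≤ t) (hlam : Continuous lam) (hy : 0 ≤ y) :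
    honestTime s t lam y ∈ {r | r ∈ Icc s t ∧ ∫ u in r..t, lam u ≤ y} := by
  have hclosed : IsClosed {r | r ∈ Icc s t ∧ ∫ u in r..t, lam u ≤ y} :=
    isClosed_Icc.inter (isClosed_le (continuous_integral_left hlam t) continuous_const)
  have hmem := hclosed.csInf_mem ⟨t, ⟨hst, le_rfl⟩, by simpa using hy⟩ ⟨s, fun _ hr => hr.1.1⟩
  rwa [honestTime, max_eq_right hmem.1.1]

lemma honestTime_of_neg (hnn : ∀ u ∈ Icc s t, 0 ≤ lam u) (hy : y < 0) :
    honestTime s t lam y = max s 0 := by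
  have : {r | r ∈ Icc s t ∧ ∫ u in r..t, lam u ≤ y} = ∅ := eq_empty_of_forall_notMem
    fun r hr => (hy.trans_le (integral_nonneg_left hnn hr.1)).not_ge hr.2
  rw [honestTime, this, Real.sInf_empty]

lemma antitoneOn_honestTime (hst : s ≤ t) : AntitoneOn (honestTime s t lam) (Ici 0) :=
  fun a ha _ _ hab => max_le_max le_rfl (csInf_le_csInf ⟨s, fun _ hr => hr.1.1⟩
    ⟨t, ⟨hst, le_rfl⟩, by simpa using ha⟩ fun _ hr => ⟨hr.1, hr.2.trans hab⟩)

lemma measurable_honestTime (hst : s ≤ t) (hnn : ∀ u ∈ Icc s t, 0 ≤ lam u) :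
    Measurable (honestTime s t lam) := by
  have hanti : Antitone fun y => honestTime s t lam (max y 0) := fun a b hab =>
    antitoneOn_honestTime hst (le_max_right a 0) (le_max_right b 0) (max_le_max_right 0 hab)
  have : honestTime s t lam = fun y => if y < 0 then max s 0 else honestTime s t lam (max y 0) := by
    funext y
    split_ifs with hy
    · exact honestTime_of_neg hnn hy
    · rw [max_eq_left (not_lt.1 hy)]
  rw [this]
  exact Measurable.ite measurableSet_Iio measurable_const hanti.measurable

lemma honestTime_lt (hlam : Continuous lam) {v : ℝ} (hv : v ∈ Ioc s t)
    (h : ∫ u in v..t, lam u < y) : honestTime s t lam y < v := by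
  obtain ⟨w, hwy, hw⟩ : ∃ w, ∫ u in w..t, lam u < y ∧ w ∈ Ioo s v :=
    ((((continuous_integral_left hlam t).tendsto v).eventually (gt_mem_nhds h)).filter_mono
      nhdsWithin_le_nhds |>.and (Ioo_mem_nhdsLT hv.1)).exists
  exact (honestTime_le ⟨hw.1.le, hw.2.le.trans hv.2⟩ hwy.le).trans_lt hw.2

lemma lt_honestTime_iff (hst : s ≤ t) (hlam : Continuous lam) (hnn : ∀ u ∈ Icc s t, 0 ≤ lam u)
    (hy : 0 ≤ y) (hw : w ∈ Icc s t) : w < honestTime s t lam y ↔ y < ∫ u in w..t, lam u := by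
  refine ⟨fun h => not_le.1 fun h' => (honestTime_le hw h').not_gt h,
    fun h => not_le.1 fun hle => ?_⟩
  obtain ⟨hτ, hτy⟩ := honestTime_mem hst hlam hy
  exact h.not_ge ((antitoneOn_integral_left hlam hnn hτ hw hle).trans hτy)

end HonestTime

noncomputable def honestLaw (s t : ℝ) (lam : ℝ → ℝ) : Measure ℝ :=
  (expMeasure 1).map (honestTime s t lam)

instance {s t : ℝ} {lam : ℝ → ℝ} : SFinite (honestLaw s t lam) := by
  unfold honestLaw; infer_instance

section LawOfHonestTime

variable {s t : ℝ} {lam : ℝ → ℝ}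

lemma ae_honestLaw_mem_Icc (hst : s ≤ t) (hlam : Continuous lam)
    (hnn : ∀ u ∈ Icc s t, 0 ≤ lam u) : ∀ᵐ x ∂honestLaw s t lam, x ∈ Icc s t :=
  (ae_map_iff (measurable_honestTime hst hnn).aemeasurable measurableSet_Icc).2 <|
    (ae_nonneg_expMeasure one_pos).mono fun _ hy => (honestTime_mem hst hlam hy).1

lemma honestLaw_Ioi (hst : s ≤ t) (hlam : Continuous lam) (hnn : ∀ u ∈ Icc s t, 0 ≤ lam u)
    {w : ℝ} (hw : w ∈ Icc s t) :
    honestLaw s t lam (Ioi w) = ∫⁻ v in Ioc w t, ENNReal.ofReal (honestDensity t lam v) := by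
  have hae : honestTime s t lam ⁻¹' Ioi w =ᵐ[expMeasure 1] Iio (∫ u in w..t, lam u) :=
    (ae_nonneg_expMeasure one_pos).mono fun y hy =>
      propext (lt_honestTime_iff hst hlam hnn hy hw)
  rw [honestLaw, Measure.map_apply (measurable_honestTime hst hnn) measurableSet_Ioi,
    measure_congr (hae.trans Iio_ae_eq_Iic), expMeasure_Iic one_pos (integral_nonneg_left hnn hw),
    one_mul, ← integral_honestDensity hlam, ofReal_intervalIntegral_eq_setLIntegral hw.2
      ((continuous_honestDensity hlam t).intervalIntegrable w t)]
  exact fun v hv => honestDensity_nonneg hnn ⟨hw.1.trans hv.1.le, hv.2⟩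

lemma honestLaw_Iio (hst : s ≤ t) (hlam : Continuous lam) (hnn : ∀ u ∈ Icc s t, 0 ≤ lam u)
    {v : ℝ} (hv : v ∈ Ioc s t) :
    honestLaw s t lam (Iio v) = ENNReal.ofReal (exp (-∫ u in v..t, lam u)) := by
  -- `Y` has no atom at `Λ(v)`, where `τ(Y) < v` is undecided
  have hae : honestTime s t lam ⁻¹' Iio v =ᵐ[expMeasure 1] Ioi (∫ u in v..t, lam u) := by
    filter_upwards [ae_nonneg_expMeasure one_pos,
      compl_mem_ae_iff.2 (measure_singleton (∫ u in v..t, lam u))] with y hy hne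
    refine propext ⟨fun hτ => lt_of_le_of_ne (not_lt.1 fun hlt => ?_) (Ne.symm hne),
      honestTime_lt hlam hv⟩
    exact hτ.not_gt ((lt_honestTime_iff hst hlam hnn hy ⟨hv.1.le, hv.2⟩).2 hlt)
  rw [honestLaw, Measure.map_apply (measurable_honestTime hst hnn) measurableSet_Iio,
    measure_congr hae, expMeasure_Ioi one_pos (integral_nonneg_left hnn ⟨hv.1.le, hv.2⟩), one_mul]

end LawOfHonestTime

theorem pair_representation_P01_general
    {Ω : Type*} [MeasurableSpace Ω] (P : Measure Ω) [IsProbabilityMeasure P]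
    (s t : ℝ) (hst : s < t)
    (lam0 lam1 : ℝ → ℝ) (hlam0 : Continuous lam0) (hlam1 : Continuous lam1)
    (hlam0_nonneg : ∀ u ∈ Set.Icc s t, 0 ≤ lam0 u)
    (hlam1_nonneg : ∀ u ∈ Set.Icc s t, 0 ≤ lam1 u)
    (Y1 Y0 : Ω → ℝ) (hY1 : Measurable Y1) (hY0 : Measurable Y0)
    (hY1law : P.map Y1 = expMeasure 1) (hY0law : P.map Y0 = expMeasure 1)
    (hindep : IndepFun Y1 Y0 P) :
    P {ω | honestTime s t lam0 (Y0 ω) > honestTime s t lam1 (Y1 ω)}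
      = ENNReal.ofReal
          (∫ v in s..t, Real.exp (-(∫ r in v..t, (lam0 r + lam1 r))) * lam0 v) := by
  have hτ0 := measurable_honestTime hst.le hlam0_nonneg
  have hτ1 := measurable_honestTime hst.le hlam1_nonneg
  have hτ1_mem := ae_honestLaw_mem_Icc hst.le hlam1 hlam1_nonneg
  have hlt : MeasurableSet {p : ℝ × ℝ | p.1 < p.2} :=
    measurableSet_lt measurable_fst measurable_snd
  have hlaw := hindep.map_prod_comp_eq hY1 hY0 hτ1 hτ0
  rw [hY1law, hY0law] at hlaw
  calc P {ω | honestTime s t lam0 (Y0 ω) > honestTime s t lam1 (Y1 ω)}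
      = (honestLaw s t lam1).prod (honestLaw s t lam0) {p | p.1 < p.2} := by
        rw [honestLaw, honestLaw, ← hlaw]
        exact (Measure.map_apply ((hτ1.comp hY1).prodMk (hτ0.comp hY0)) hlt).symm
    _ = ∫⁻ x, honestLaw s t lam0 (Ioi x) ∂honestLaw s t lam1 := Measure.prod_apply hlt
    _ = ∫⁻ x, (∫⁻ v in Ioc x t, ENNReal.ofReal (honestDensity t lam0 v)) ∂honestLaw s t lam1 :=
        lintegral_congr_ae <| hτ1_mem.mono fun x hx => honestLaw_Ioi hst.le hlam0 hlam0_nonneg hx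
    _ = ∫⁻ v in Ioc s t, ENNReal.ofReal (honestDensity t lam0 v) * honestLaw s t lam1 (Iio v) :=
        lintegral_setLIntegral_Ioc (hτ1_mem.mono fun _ hx => hx.1)
          (continuous_honestDensity hlam0 t).measurable.ennreal_ofReal
    _ = ∫⁻ v in Ioc s t, ENNReal.ofReal (exp (-∫ r in v..t, (lam0 r + lam1 r)) * lam0 v) :=
        setLIntegral_congr_fun measurableSet_Ioc fun v hv => by
          rw [honestLaw_Iio hst.le hlam1 hlam1_nonneg hv,
            ← ENNReal.ofReal_mul (honestDensity_nonneg hlam0_nonneg ⟨hv.1.le, hv.2⟩),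
            honestDensity_mul_exp_neg_integral hlam0 hlam1]
    _ = _ := by
        refine (ofReal_intervalIntegral_eq_setLIntegral hst.le (Continuous.intervalIntegrable
          ((continuous_integral_left (hlam0.add hlam1) t).neg.rexp.mul hlam0) s t)
          fun v hv => ?_).symm
        exact mul_nonneg (exp_nonneg _) (hlam0_nonneg v ⟨hv.1.le, hv.2⟩)

/-- Pair representation of `P₀₁`: with `τ¹`, `τ⁰` the honest times on `[s,t]` associated
with `λ₁`, `λ₀`, driven by independent `Exp(1)` random variables,
`P(τ⁰ > τ¹) = P₀₁(s,t) = ∫_s^t exp (-∫_v^t (λ₀+λ₁)(r) dr) λ₀(v) dv`;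
the indicator `1(τ⁰ > τ¹)` is an unbiased estimator of `P₀₁(s,t)`. -/
theorem pair_representation_P01
    {Ω : Type*} [MeasurableSpace Ω] (P : Measure Ω) [IsProbabilityMeasure P]
    (s t : ℝ) (hs : 0 ≤ s) (hst : s < t)
    (lam0 lam1 : ℝ → ℝ) (hlam0 : Continuous lam0) (hlam1 : Continuous lam1)
    (hlam0_nonneg : ∀ u ∈ Set.Icc s t, 0 ≤ lam0 u)
    (hlam1_nonneg : ∀ u ∈ Set.Icc s t, 0 ≤ lam1 u)
    (Y1 Y0 : Ω → ℝ) (hY1 : Measurable Y1) (hY0 : Measurable Y0)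
    (hY1law : P.map Y1 = expMeasure 1) (hY0law : P.map Y0 = expMeasure 1)
    (hindep : IndepFun Y1 Y0 P) :
    P {ω | honestTime s t lam0 (Y0 ω) > honestTime s t lam1 (Y1 ω)}
      = ENNReal.ofReal
          (∫ v in s..t, Real.exp (-(∫ r in v..t, (lam0 r + lam1 r))) * lam0 v) :=
  pair_representation_P01_general P s t hst lam0 lam1 hlam0 hlam1 hlam0_nonneg hlam1_nonneg Y1 Y0
    hY1 hY0 hY1law hY0law hindep
end
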